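/- arXiv:2510.06609 — 2 statements merged into one kernel-verified Lean document; each statement's English description precedes it below -/
import Mathlib

section
/- Let M be a loopless matroid of rank r on a finite ground set E, let d be an integer with 0 < d < r, and let s ∈ E. Then ∑_{I ⊆ {1,…,d}, d ∈ I} (−1)^{|I|} N_{I,s} = ∑_{I ⊆ {1,…,d}} (−1)^{|I|} N_I. -/
open scoped Classical
open MvPolynomial

namespace ChowPaper

variable {α : Type*}

/-- A matroid is loopless if every element of the ground set is independent as a singleton. -/
def Loopless (M : Matroid α) : Prop := ∀ a ∈ M.E, M.Indep ({a} : Set α)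

/-- The (natural-number) rank of a set in a matroid: the supremum of the cardinalities of
independent subsets. -/
noncomputable def rkN (M : Matroid α) (X : Set α) : ℕ :=
  sSup {n : ℕ | ∃ I, M.Indep I ∧ I ⊆ X ∧ I.ncard = n}

/-- Nonempty proper flats of a matroid. -/
def PFlat (M : Matroid α) (F : Set α) : Prop := M.IsFlat F ∧ F.Nonempty ∧ F ≠ M.E

/-- The index type of variables of the Chow ring: nonempty proper flats. -/
def FlatIdx (M : Matroid α) := {F : Set α // PFlat M F}

variable (R : Type*) [CommRing R]

/-- The polynomial ring `R[x_F : F a nonempty proper flat]`. -/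
abbrev Pre (M : Matroid α) := MvPolynomial (FlatIdx M) R

/-- The linear form `∑_{F ∋ i} x_F`. -/
noncomputable def alphaPre (M : Matroid α) (i : α) : Pre R M :=
  ∑ᶠ F : FlatIdx M, if i ∈ F.1 then X F else 0

/-- The linear form `∑_{F ∌ i} x_F`. -/
noncomputable def betaPre (M : Matroid α) (i : α) : Pre R M :=
  ∑ᶠ F : FlatIdx M, if i ∉ F.1 then X F else 0

/-- The defining ideal of the Chow ring of a matroid:  generated by products `x_F x_G` for
incomparable flats, and the differences `(∑_{F ∋ i} x_F) - (∑_{F ∋ j} x_F)` for `i j` in the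
ground set. -/
noncomputable def chowIdeal (M : Matroid α) : Ideal (Pre R M) :=
  Ideal.span ({p | ∃ F G : FlatIdx M, ¬ F.1 ⊆ G.1 ∧ ¬ G.1 ⊆ F.1 ∧ p = X F * X G} ∪
    {p | ∃ i ∈ M.E, ∃ j ∈ M.E, p = alphaPre R M i - alphaPre R M j})

/-- The Chow ring of a matroid. -/
abbrev Chow (M : Matroid α) := Pre R M ⧸ chowIdeal R M

/-- The quotient map onto the Chow ring. -/
noncomputable def cmk (M : Matroid α) : Pre R M →+* Chow R M :=
  Ideal.Quotient.mk (chowIdeal R M)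

/-- The class `x_F` of a nonempty proper flat in the Chow ring. -/
noncomputable def xcls (M : Matroid α) (F : FlatIdx M) : Chow R M := cmk R M (X F)

/-- The class `x_F` for any set, with the convention that `x_F = 1` when `F` is not a nonempty
proper flat (in particular `x_∅ = x_E = 1`). -/
noncomputable def xv (M : Matroid α) (F : Set α) : Chow R M :=
  if h : PFlat M F then xcls R M ⟨F, h⟩ else 1

/-- The class `α = ∑_{F ∋ i} x_F` in the Chow ring. -/
noncomputable def alpha (M : Matroid α) (i : α) : Chow R M := cmk R M (alphaPre R M i)

/-- The class `β = ∑_{F ∌ i} x_F` in the Chow ring. -/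
noncomputable def beta (M : Matroid α) (i : α) : Chow R M := cmk R M (betaPre R M i)

/-- The class `α_S = α - ∑_{S ⊆ F} x_F`. -/
noncomputable def alphaS (M : Matroid α) (i : α) (S : Set α) : Chow R M :=
  alpha R M i - cmk R M (∑ᶠ F : FlatIdx M, if S ⊆ F.1 then X F else 0)

/-- The class `β_S = β - ∑_{F ⊆ E \ S} x_F`. -/
noncomputable def betaS (M : Matroid α) (i : α) (S : Set α) : Chow R M :=
  beta R M i - cmk R M (∑ᶠ F : FlatIdx M, if F.1 ⊆ M.E \ S then X F else 0)

/-- The sum of the classes of all flats of a given rank `n`. -/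
noncomputable def flatsOfRank (M : Matroid α) (n : ℕ) : Chow R M :=
  cmk R M (∑ᶠ F : FlatIdx M, if rkN M F.1 = n then X F else 0)

/-- The degree-1 class with coefficients `c`, i.e. `∑_F c_F x_F`. -/
noncomputable def lin (M : Matroid α) (c : FlatIdx M → R) : Chow R M :=
  cmk R M (∑ᶠ F : FlatIdx M, MvPolynomial.C (c F) * X F)

/-- `deg` is a degree map for a rank-`r` matroid if it is linear and sends the monomial of every
complete flag `F_1 ⊊ ⋯ ⊊ F_{r-1}` of nonempty proper flats to `1`.  (By Adiprasito–Huh–Katz such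
a map exists and its values on the degree-`(r-1)` part of the Chow ring are uniquely
determined.) -/
def IsDegMap (M : Matroid α) (r : ℕ) (deg : Chow R M →ₗ[R] R) : Prop :=
  ∀ G : Fin (r - 1) → FlatIdx M, (StrictMono fun t => (G t).1) →
    deg (cmk R M (∏ t, X (G t))) = 1

/-- A finite set of subsets is a flag of (nonempty proper) flats if all members are nonempty
proper flats and they are pairwise comparable. -/
def IsFlagF (M : Matroid α) (S : Finset (Set α)) : Prop :=
  (∀ F ∈ S, PFlat M F) ∧ ∀ F ∈ S, ∀ G ∈ S, F ⊆ G ∨ G ⊆ F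

/-- A finite set of nonempty proper flats is a flag if its members are pairwise comparable. -/
def IsFlagIdx (M : Matroid α) (S : Finset (FlatIdx M)) : Prop :=
  ∀ F ∈ S, ∀ G ∈ S, F.1 ⊆ G.1 ∨ G.1 ⊆ F.1

/-- `N_I`: the number of flags of nonempty proper flats whose set of ranks is exactly `I`. -/
noncomputable def Ncount (M : Matroid α) (I : Finset ℕ) : ℕ :=
  {S : Finset (Set α) | IsFlagF M S ∧ S.image (rkN M) = I}.ncard

/-- `N_{I,s}`: the number of flags of nonempty proper flats with rank set `I` none of whose
members contains `s` (equivalently, whose maximal member does not contain `s`). -/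
noncomputable def NcountS (M : Matroid α) (I : Finset ℕ) (s : α) : ℕ :=
  {S : Finset (Set α) | IsFlagF M S ∧ S.image (rkN M) = I ∧ ∀ F ∈ S, s ∉ F}.ncard

/-- Combinatorial nefness (property (P3)): for every flag there is a representation with
coefficients vanishing on the flag and nonnegative on every flat that can be inserted into the
flag. -/
def CombNef (M : Matroid α) (ℓ : Chow ℝ M) : Prop :=
  ∀ S : Finset (FlatIdx M), IsFlagIdx M S →
    ∃ c : FlatIdx M → ℝ, ℓ = lin ℝ M c ∧ (∀ F ∈ S, c F = 0) ∧
      ∀ F : FlatIdx M, F ∉ S → (∀ G ∈ S, F.1 ⊆ G.1 ∨ G.1 ⊆ F.1) → 0 ≤ c F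

/-- Combinatorial ampleness: as nefness, with strictly positive coefficients on insertable
flats. -/
def CombAmple (M : Matroid α) (ℓ : Chow ℝ M) : Prop :=
  ∀ S : Finset (FlatIdx M), IsFlagIdx M S →
    ∃ c : FlatIdx M → ℝ, ℓ = lin ℝ M c ∧ (∀ F ∈ S, c F = 0) ∧
      ∀ F : FlatIdx M, F ∉ S → (∀ G ∈ S, F.1 ⊆ G.1 ∨ G.1 ⊆ F.1) → 0 < c F

/-- Property (P2): for every flag there is a representation with coefficients vanishing on the
flag and nonnegative on all nonempty proper flats. -/
def P2 (M : Matroid α) (ℓ : Chow ℝ M) : Prop :=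
  ∀ S : Finset (FlatIdx M), IsFlagIdx M S →
    ∃ c : FlatIdx M → ℝ, ℓ = lin ℝ M c ∧ (∀ F ∈ S, c F = 0) ∧ ∀ F : FlatIdx M, 0 ≤ c F

/-- The fake effective cone: classes with nonnegative degree against every product of `r - 2`
combinatorially nef classes. -/
noncomputable def FakeEff (M : Matroid α) (r : ℕ) (deg : Chow ℝ M →ₗ[ℝ] ℝ) : Set (Chow ℝ M) :=
  {D | ∀ L : Fin (r - 2) → Chow ℝ M, (∀ t, CombNef M (L t)) → 0 ≤ deg (D * ∏ t, L t)}

/-- The matroid base polytope, as a subset of `α → ℝ`: the convex hull of the indicator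
vectors of the bases. -/
noncomputable def polytope (M : Matroid α) : Set (α → ℝ) :=
  convexHull ℝ {x | ∃ B, M.IsBase B ∧ x = B.indicator 1}

/-- The flag-counting function `N̂_{𝓕,I}` of Theorem 6.2: the number of flags of nonempty proper
flats with rank set `I`, disjoint from `𝓕` and forming a flag of flats together with `𝓕`,
provided every member of `𝓕` is a flat; and `0` otherwise. -/
noncomputable def Nhat (M : Matroid α) (Fl : Finset (Set α)) (I : Finset ℕ) : ℤ :=
  if ∀ F ∈ Fl, M.IsFlat F then
    ({G : Finset (Set α) | IsFlagF M G ∧ G.image (rkN M) = I ∧ Disjoint G Fl ∧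
      IsFlagF M (G ∪ Fl)}).ncard
  else 0


section Involution

variable {M : Matroid α}

lemma flat_closure' (M : Matroid α) (X : Set α) : M.IsFlat (M.closure X) := by
  refine ⟨fun I Y hI hIY => ?_, M.closure_subset_ground X⟩
  have h1 : Y ⊆ M.closure I := hIY.subset_closure
  rwa [hI.closure_eq_closure, M.closure_closure] at h1

lemma rkN_bddAbove (hfin : M.E.Finite) (X : Set α) :
    BddAbove {n : ℕ | ∃ I, M.Indep I ∧ I ⊆ X ∧ I.ncard = n} := by
  refine ⟨M.E.ncard, ?_⟩
  rintro n ⟨I, hI, -, rfl⟩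
  exact Set.ncard_le_ncard hI.subset_ground hfin

lemma le_rkN (hfin : M.E.Finite) {X I : Set α} (hI : M.Indep I) (hIX : I ⊆ X) :
    I.ncard ≤ rkN M X :=
  le_csSup (rkN_bddAbove hfin X) ⟨I, hI, hIX, rfl⟩

lemma rkN_le {X : Set α} {n : ℕ} (h : ∀ I, M.Indep I → I ⊆ X → I.ncard ≤ n) :
    rkN M X ≤ n := by
  refine csSup_le ⟨0, ∅, M.empty_indep, Set.empty_subset X, by simp⟩ ?_
  rintro m ⟨I, hI, hIX, rfl⟩
  exact h I hI hIX

lemma rkN_basis (hfin : M.E.Finite) {I X : Set α} (hB : M.IsBasis I X) :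
    rkN M X = I.ncard := by
  refine le_antisymm (rkN_le fun J hJ hJX => ?_) (le_rkN hfin hB.indep hB.subset)
  obtain ⟨K, hK, hJK⟩ := hJ.subset_isBasis_of_subset hJX hB.subset_ground
  have hKfin : K.Finite := hfin.subset hK.indep.subset_ground
  have h1 : J.ncard ≤ K.ncard := Set.ncard_le_ncard hJK hKfin
  have h2 : K.ncard = I.ncard := by
    have h := hK.encard_eq_encard hB
    rw [Set.ncard_def, Set.ncard_def, h]
  omega

lemma rkN_mono (hfin : M.E.Finite) {X Y : Set α} (hXY : X ⊆ Y) : rkN M X ≤ rkN M Y := by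
  refine csSup_le_csSup (rkN_bddAbove hfin Y)
    ⟨0, ∅, M.empty_indep, Set.empty_subset X, by simp⟩ ?_
  rintro n ⟨I, hI, hIX, rfl⟩
  exact ⟨I, hI, hIX.trans hXY, rfl⟩

lemma rkN_empty (M : Matroid α) : rkN M (∅ : Set α) = 0 := by
  refine le_antisymm (rkN_le fun I hI hIX => ?_) (Nat.zero_le _)
  simp [Set.subset_empty_iff.mp hIX]

lemma rkN_closure (hfin : M.E.Finite) {X : Set α} (hX : X ⊆ M.E) :
    rkN M (M.closure X) = rkN M X := by
  obtain ⟨I, hI⟩ := M.exists_isBasis X hX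
  rw [rkN_basis hfin hI.isBasis_closure_right, rkN_basis hfin hI]

lemma rkN_insert_le (hfin : M.E.Finite) {U : Set α} (hU : U ⊆ M.E) {x : α} (hx : x ∈ M.E) :
    rkN M (insert x U) ≤ rkN M U + 1 := by
  obtain ⟨K, hK⟩ := M.exists_isBasis (insert x U) (Set.insert_subset hx hU)
  rw [rkN_basis hfin hK]
  have h1 : K ⊆ insert x (K ∩ U) := by
    intro y hy
    rcases hK.subset hy with rfl | h
    · exact Set.mem_insert _ _
    · exact Set.mem_insert_of_mem _ ⟨hy, h⟩
  have hKfin : K.Finite := hfin.subset hK.indep.subset_ground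
  calc K.ncard ≤ (insert x (K ∩ U)).ncard :=
        Set.ncard_le_ncard h1 ((hKfin.inter_of_left U).insert x)
    _ ≤ (K ∩ U).ncard + 1 := Set.ncard_insert_le _ _
    _ ≤ rkN M U + 1 := by
        have h2 : (K ∩ U).ncard ≤ rkN M U :=
          le_rkN hfin (hK.indep.subset Set.inter_subset_left) Set.inter_subset_right
        omega

lemma rkN_lt_of_flat_ssubset (hfin : M.E.Finite) {F G : Set α}
    (hF : M.IsFlat F) (hG : M.IsFlat G) (hss : F ⊂ G) : rkN M F < rkN M G := by
  obtain ⟨I, hI⟩ := M.exists_isBasis F hF.subset_ground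
  obtain ⟨x, hxG, hxF⟩ := Set.exists_of_ssubset hss
  have hxI : x ∉ I := fun h => hxF (hI.subset h)
  have hxcl : x ∉ M.closure I := by
    rw [hI.closure_eq_closure, hF.closure]; exact hxF
  have hind : M.Indep (insert x I) := by
    rw [hI.indep.insert_indep_iff_of_notMem hxI]
    exact ⟨hG.subset_ground hxG, hxcl⟩
  have hIfin : I.Finite := hfin.subset hI.indep.subset_ground
  have hle : (insert x I).ncard ≤ rkN M G :=
    le_rkN hfin hind (Set.insert_subset hxG (hI.subset.trans hss.subset))
  rw [Set.ncard_insert_of_notMem hxI hIfin] at hle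
  rw [rkN_basis hfin hI]
  omega

lemma one_le_rkN (hfin : M.E.Finite) (hloop : Loopless M) {F : Set α} (hFE : F ⊆ M.E)
    {a : α} (ha : a ∈ F) : 1 ≤ rkN M F := by
  have h := le_rkN hfin (hloop a (hFE ha)) (Set.singleton_subset_iff.mpr ha)
  simpa using h

lemma chain_exists_top {P : Finset (Set α)} (hP : ∀ F ∈ P, ∀ G ∈ P, F ⊆ G ∨ G ⊆ F)
    (hne : P.Nonempty) : ∃ m ∈ P, ∀ F ∈ P, F ⊆ m := by
  classical
  revert hne hP
  induction P using Finset.induction_on with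
  | empty => intro _ hne; exact absurd hne (by simp)
  | @insert a Q haQ ih =>
    intro hP hne
    rcases Q.eq_empty_or_nonempty with rfl | hQne
    · exact ⟨a, Finset.mem_insert_self _ _, by simp⟩
    · obtain ⟨m, hmQ, hm⟩ := ih (fun F hF G hG =>
        hP F (Finset.mem_insert_of_mem hF) G (Finset.mem_insert_of_mem hG)) hQne
      rcases hP a (Finset.mem_insert_self _ _) m (Finset.mem_insert_of_mem hmQ) with h | h
      · refine ⟨m, Finset.mem_insert_of_mem hmQ, fun F hF => ?_⟩
        rcases Finset.mem_insert.mp hF with rfl | hF'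
        · exact h
        · exact hm F hF'
      · refine ⟨a, Finset.mem_insert_self _ _, fun F hF => ?_⟩
        rcases Finset.mem_insert.mp hF with rfl | hF'
        · exact subset_rfl
        · exact (hm F hF').trans h

/-- The flat used in the sign-reversing involution: the closure of `{s}` together with all
members of the flag not containing `s`. -/
noncomputable def gflat (M : Matroid α) (s : α) (S : Finset (Set α)) : Set α :=
  M.closure (insert s (⋃₀ ↑(S.filter (fun F => s ∉ F))))

lemma mem_gflat {s : α} (hs : s ∈ M.E) (S : Finset (Set α)) : s ∈ gflat M s S :=
  M.inter_ground_subset_closure _ ⟨Set.mem_insert _ _, hs⟩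

lemma gflat_insert {s : α} (S : Finset (Set α)) {G : Set α} (hsG : s ∈ G) :
    gflat M s (insert G S) = gflat M s S := by
  unfold gflat
  rw [Finset.filter_insert, if_neg (by simp [hsG])]

lemma gflat_erase {s : α} (S : Finset (Set α)) {G : Set α} (hsG : s ∈ G) :
    gflat M s (S.erase G) = gflat M s S := by
  have hfe : (S.erase G).filter (fun F => s ∉ F) = S.filter (fun F => s ∉ F) := by
    ext F
    simp only [Finset.mem_filter, Finset.mem_erase]
    constructor
    · rintro ⟨⟨-, hFS⟩, hsF⟩; exact ⟨hFS, hsF⟩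
    · rintro ⟨hFS, hsF⟩; exact ⟨⟨fun h => hsF (h ▸ hsG), hFS⟩, hsF⟩
  unfold gflat
  rw [hfe]

lemma key_props (hfin : M.E.Finite) (hloop : Loopless M) {r d : ℕ} (hr : rkN M M.E = r)
    (hd0 : 0 < d) (hdr : d < r) {s : α} (hs : s ∈ M.E) {S : Finset (Set α)}
    (hflag : IsFlagF M S) (hranks : ∀ F ∈ S, rkN M F ∈ Finset.Icc 1 d)
    (hbad : ¬ ((∃ F ∈ S, rkN M F = d) ∧ ∀ F ∈ S, s ∉ F)) :
    PFlat M (gflat M s S) ∧ rkN M (gflat M s S) ∈ Finset.Icc 1 d ∧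
      (∀ F ∈ S.filter (fun F => s ∉ F), F ⊆ gflat M s S) ∧
      (∀ F ∈ S, s ∈ F → gflat M s S ⊆ F) := by
  classical
  set P : Finset (Set α) := S.filter (fun F => s ∉ F) with hPdef
  set U : Set α := ⋃₀ (↑P : Set (Set α)) with hUdef
  have hPsub : ∀ F ∈ P, F ⊆ U := fun F hF =>
    Set.subset_sUnion_of_mem (Finset.mem_coe.mpr hF)
  have hUE : U ⊆ M.E := Set.sUnion_subset fun F hF =>
    ((hflag.1 F (Finset.mem_of_mem_filter F (Finset.mem_coe.mp hF))).1.subset_ground)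
  have hsU : insert s U ⊆ M.E := Set.insert_subset hs hUE
  have hGdef : gflat M s S = M.closure (insert s U) := rfl
  set G : Set α := gflat M s S with hG
  have hGflat : M.IsFlat G := by rw [hGdef]; exact flat_closure' M _
  have hGE : G ⊆ M.E := hGflat.subset_ground
  have hsG : s ∈ G := mem_gflat hs S
  have hUG : U ⊆ G := by
    rw [hGdef]
    exact (Set.subset_insert s U).trans (M.subset_closure _ hsU)
  have hPG : ∀ F ∈ P, F ⊆ G := fun F hF => (hPsub F hF).trans hUG
  have hTG : ∀ F ∈ S, s ∈ F → G ⊆ F := by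
    intro F hFS hsF
    have h1 : insert s U ⊆ F := by
      refine Set.insert_subset hsF (Set.sUnion_subset ?_)
      intro p hp
      have hpP := Finset.mem_coe.mp hp
      have hpS := Finset.mem_of_mem_filter p hpP
      have hps : s ∉ p := (Finset.mem_filter.mp hpP).2
      rcases hflag.2 p hpS F hFS with h | h
      · exact h
      · exact absurd (h hsF) hps
    rw [hGdef]
    calc M.closure (insert s U) ⊆ M.closure F := M.closure_subset_closure h1
      _ = F := (hflag.1 F hFS).1.closure
  have hrkG : rkN M G ≤ d ∧ G ≠ M.E := by
    by_cases hT : ∃ F ∈ S, s ∈ F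
    · obtain ⟨F, hFS, hsF⟩ := hT
      have hGF := hTG F hFS hsF
      refine ⟨le_trans (rkN_mono hfin hGF) (Finset.mem_Icc.mp (hranks F hFS)).2, ?_⟩
      intro hGEq
      exact (hflag.1 F hFS).2.2 (le_antisymm (hflag.1 F hFS).1.subset_ground (hGEq ▸ hGF))
    · push_neg at hT
      have hnd : ¬ ∃ F ∈ S, rkN M F = d := fun h => hbad ⟨h, hT⟩
      have hU_rk : rkN M U < d := by
        rcases P.eq_empty_or_nonempty with hPe | hPne
        · rw [hUdef, hPe]
          simpa [rkN_empty] using hd0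
        · obtain ⟨m, hmP, hm⟩ := chain_exists_top (fun F hF G' hG' =>
            hflag.2 F (Finset.mem_of_mem_filter F hF) G' (Finset.mem_of_mem_filter G' hG')) hPne
          have hUm : U = m := by
            refine le_antisymm (Set.sUnion_subset fun F hF => hm F (Finset.mem_coe.mp hF))
              (hPsub m hmP)
          have hmS : m ∈ S := Finset.mem_of_mem_filter m hmP
          have h1 := (Finset.mem_Icc.mp (hranks m hmS)).2
          have hne : rkN M m ≠ d := fun h => hnd ⟨m, hmS, h⟩
          rw [hUm]
          omega
      have h2 : rkN M G ≤ rkN M U + 1 := by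
        rw [hGdef, rkN_closure hfin hsU]
        exact rkN_insert_le hfin hUE hs
      refine ⟨by omega, ?_⟩
      intro hGEq
      have h3 : rkN M G = r := by rw [hGEq, hr]
      omega
  have hG1 : 1 ≤ rkN M G := one_le_rkN hfin hloop hGE hsG
  exact ⟨⟨hGflat, ⟨s, hsG⟩, hrkG.2⟩, Finset.mem_Icc.mpr ⟨hG1, hrkG.1⟩, hPG, hTG⟩

end Involution

/-- For a loopless matroid of rank `r`, `0 < d < r` and `s ∈ E`:
`∑_{I ⊆ [d], d ∈ I} (-1)^{|I|} N_{I,s} = ∑_{I ⊆ [d]} (-1)^{|I|} N_I`. -/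
theorem stmt0 (M : Matroid α) (hfin : M.E.Finite) (hloop : Loopless M)
    (r : ℕ) (hr : rkN M M.E = r) (d : ℕ) (hd0 : 0 < d) (hdr : d < r)
    (s : α) (hs : s ∈ M.E) :
    ∑ I ∈ (Finset.Icc 1 d).powerset.filter (fun I => d ∈ I),
        (-1 : ℤ) ^ I.card * (NcountS M I s : ℤ)
      = ∑ I ∈ (Finset.Icc 1 d).powerset, (-1 : ℤ) ^ I.card * (Ncount M I : ℤ) := by
  classical
  -- the ambient finset of all finsets of subsets of the ground set
  set 𝒜 : Finset (Finset (Set α)) := hfin.finite_subsets.toFinset.powerset with h𝒜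
  have hmem𝒜 : ∀ S : Finset (Set α), S ∈ 𝒜 ↔ ∀ F ∈ S, F ⊆ M.E := by
    intro S
    simp only [h𝒜, Finset.mem_powerset, Finset.subset_iff, Set.Finite.mem_toFinset,
      Set.mem_setOf_eq]
  have hsubE : ∀ {S : Finset (Set α)}, IsFlagF M S → ∀ F ∈ S, F ⊆ M.E :=
    fun hS F hF => (hS.1 F hF).1.subset_ground
  -- counting conversions
  have hNc : ∀ I : Finset ℕ,
      Ncount M I = (𝒜.filter (fun S => IsFlagF M S ∧ S.image (rkN M) = I)).card := by
    intro I
    have hset : {S : Finset (Set α) | IsFlagF M S ∧ S.image (rkN M) = I} =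
        ↑(𝒜.filter (fun S => IsFlagF M S ∧ S.image (rkN M) = I)) := by
      ext S
      simp only [Set.mem_setOf_eq, Finset.coe_filter, Set.mem_setOf_eq]
      constructor
      · exact fun h => ⟨(hmem𝒜 S).mpr (hsubE h.1), h⟩
      · exact fun h => h.2
    rw [Ncount, hset, Set.ncard_coe_finset]
  have hNcS : ∀ I : Finset ℕ,
      NcountS M I s = (𝒜.filter (fun S => IsFlagF M S ∧ S.image (rkN M) = I ∧
        ∀ F ∈ S, s ∉ F)).card := by
    intro I
    have hset : {S : Finset (Set α) | IsFlagF M S ∧ S.image (rkN M) = I ∧ ∀ F ∈ S, s ∉ F} =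
        ↑(𝒜.filter (fun S => IsFlagF M S ∧ S.image (rkN M) = I ∧ ∀ F ∈ S, s ∉ F)) := by
      ext S
      simp only [Set.mem_setOf_eq, Finset.coe_filter, Set.mem_setOf_eq]
      constructor
      · exact fun h => ⟨(hmem𝒜 S).mpr (hsubE h.1), h⟩
      · exact fun h => h.2
    rw [NcountS, hset, Set.ncard_coe_finset]
  set All : Finset (Finset (Set α)) :=
    𝒜.filter (fun S => IsFlagF M S ∧ S.image (rkN M) ⊆ Finset.Icc 1 d) with hAll
  set q : Finset (Set α) → Prop :=
    fun S => d ∈ S.image (rkN M) ∧ ∀ F ∈ S, s ∉ F with hq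
  set f : Finset (Set α) → ℤ := fun S => (-1) ^ (S.image (rkN M)).card with hf
  -- rewrite RHS as a sum over flags
  have hRHS : ∑ I ∈ (Finset.Icc 1 d).powerset, (-1 : ℤ) ^ I.card * (Ncount M I : ℤ)
      = ∑ S ∈ All, f S := by
    rw [← Finset.sum_fiberwise_of_maps_to (g := fun S => S.image (rkN M))
      (t := (Finset.Icc 1 d).powerset)
      (fun S hS => Finset.mem_powerset.mpr (Finset.mem_filter.mp hS).2.2) f]
    refine Finset.sum_congr rfl fun I hI => ?_
    have hfilter : Finset.filter (fun S => S.image (rkN M) = I) All =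
        𝒜.filter (fun S => IsFlagF M S ∧ S.image (rkN M) = I) := by
      ext S
      simp only [hAll, Finset.mem_filter]
      constructor
      · rintro ⟨⟨hA, hfl, -⟩, him⟩; exact ⟨hA, hfl, him⟩
      · rintro ⟨hA, hfl, him⟩
        exact ⟨⟨hA, hfl, him ▸ Finset.mem_powerset.mp hI⟩, him⟩
    have hconst : ∑ S ∈ Finset.filter (fun S => S.image (rkN M) = I) All, f S
        = ∑ _S ∈ Finset.filter (fun S => S.image (rkN M) = I) All, (-1 : ℤ) ^ I.card :=
      Finset.sum_congr rfl fun S hS => by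
        simp only [hf]; rw [(Finset.mem_filter.mp hS).2]
    rw [hconst, Finset.sum_const, hfilter, hNc I, nsmul_eq_mul, mul_comm]
  -- rewrite LHS as a sum over flags
  have hLHS : ∑ I ∈ (Finset.Icc 1 d).powerset.filter (fun I => d ∈ I),
        (-1 : ℤ) ^ I.card * (NcountS M I s : ℤ) = ∑ S ∈ All.filter q, f S := by
    rw [← Finset.sum_fiberwise_of_maps_to (g := fun S => S.image (rkN M))
      (t := (Finset.Icc 1 d).powerset.filter (fun I => d ∈ I))
      (fun S hS => ?_) f]
    · refine Finset.sum_congr rfl fun I hI => ?_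
      obtain ⟨hIp, hdI⟩ := Finset.mem_filter.mp hI
      have hfilter : Finset.filter (fun S => S.image (rkN M) = I) (All.filter q) =
          𝒜.filter (fun S => IsFlagF M S ∧ S.image (rkN M) = I ∧ ∀ F ∈ S, s ∉ F) := by
        ext S
        simp only [hAll, hq, Finset.mem_filter]
        constructor
        · rintro ⟨⟨⟨hA, hfl, -⟩, -, hsf⟩, him⟩; exact ⟨hA, hfl, him, hsf⟩
        · rintro ⟨hA, hfl, him, hsf⟩
          exact ⟨⟨⟨hA, hfl, him ▸ Finset.mem_powerset.mp hIp⟩, him ▸ hdI, hsf⟩, him⟩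
      have hconst : ∑ S ∈ Finset.filter (fun S => S.image (rkN M) = I) (All.filter q), f S
          = ∑ _S ∈ Finset.filter (fun S => S.image (rkN M) = I) (All.filter q),
            (-1 : ℤ) ^ I.card :=
        Finset.sum_congr rfl fun S hS => by
          simp only [hf]; rw [(Finset.mem_filter.mp hS).2]
      rw [hconst, Finset.sum_const, hfilter, hNcS I, nsmul_eq_mul, mul_comm]
    · obtain ⟨hSAll, hdS, -⟩ := Finset.mem_filter.mp hS
      exact Finset.mem_filter.mpr
        ⟨Finset.mem_powerset.mpr (Finset.mem_filter.mp hSAll).2.2, hdS⟩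
  rw [hLHS, hRHS, ← Finset.sum_filter_add_sum_filter_not All q f]
  -- it remains to show that the sum over "bad" flags vanishes
  suffices hzero : ∑ S ∈ All.filter (fun S => ¬ q S), f S = 0 by rw [hzero, add_zero]
  -- unfold membership in the bad set
  have hBadMem : ∀ S : Finset (Set α), S ∈ All.filter (fun S => ¬ q S) ↔
      (IsFlagF M S ∧ (∀ F ∈ S, rkN M F ∈ Finset.Icc 1 d)) ∧
        ¬ ((∃ F ∈ S, rkN M F = d) ∧ ∀ F ∈ S, s ∉ F) := by
    intro S
    rw [Finset.mem_filter, hAll, Finset.mem_filter, hmem𝒜]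
    constructor
    · rintro ⟨⟨hE, hfl, hrk⟩, hnq⟩
      refine ⟨⟨hfl, fun F hF => hrk (Finset.mem_image_of_mem _ hF)⟩, fun h => hnq ?_⟩
      simp only [hq]
      obtain ⟨⟨F, hF, hrkF⟩, hsf⟩ := h
      exact ⟨Finset.mem_image.mpr ⟨F, hF, hrkF⟩, hsf⟩
    · rintro ⟨⟨hfl, hrk⟩, hnb⟩
      refine ⟨⟨hsubE hfl, hfl, ?_⟩, fun h => hnb ?_⟩
      · intro n hn
        obtain ⟨F, hF, rfl⟩ := Finset.mem_image.mp hn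
        exact hrk F hF
      · simp only [hq] at h
        obtain ⟨hd, hsf⟩ := h
        obtain ⟨F, hF, hrkF⟩ := Finset.mem_image.mp hd
        exact ⟨⟨F, hF, hrkF⟩, hsf⟩
  -- injectivity of the rank on a flag
  have hcard_img : ∀ S : Finset (Set α), IsFlagF M S → (S.image (rkN M)).card = S.card := by
    intro S hfl
    apply Finset.card_image_of_injOn
    intro x hx y hy hxy
    by_contra hne
    rcases hfl.2 x (Finset.mem_coe.mp hx) y (Finset.mem_coe.mp hy) with h | h
    · have := rkN_lt_of_flat_ssubset hfin (hfl.1 x (Finset.mem_coe.mp hx)).1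
        (hfl.1 y (Finset.mem_coe.mp hy)).1 (h.ssubset_of_ne hne)
      omega
    · have := rkN_lt_of_flat_ssubset hfin (hfl.1 y (Finset.mem_coe.mp hy)).1
        (hfl.1 x (Finset.mem_coe.mp hx)).1 (h.ssubset_of_ne (Ne.symm hne))
      omega
  -- the involution
  refine Finset.sum_involution
    (fun S _ => if gflat M s S ∈ S then S.erase (gflat M s S) else insert (gflat M s S) S)
    ?_ ?_ ?_ ?_
  case refine_3 => -- membership
    intro S hS
    obtain ⟨⟨hflag, hranks⟩, hbad⟩ := (hBadMem S).mp hS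
    obtain ⟨hPF, hrkIcc, hPG, hTG⟩ := key_props hfin hloop hr hd0 hdr hs hflag hranks hbad
    by_cases hGmem : gflat M s S ∈ S
    · simp only [if_pos hGmem]
      refine (hBadMem _).mpr ⟨⟨⟨fun F hF => hflag.1 F (Finset.mem_of_mem_erase hF),
        fun F hF G hG => hflag.2 F (Finset.mem_of_mem_erase hF) G (Finset.mem_of_mem_erase hG)⟩,
        fun F hF => hranks F (Finset.mem_of_mem_erase hF)⟩, ?_⟩
      rintro ⟨⟨F, hF, hrkF⟩, hsfree⟩
      have hFS : F ∈ S := Finset.mem_of_mem_erase hF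
      have hFG : F ≠ gflat M s S := Finset.ne_of_mem_erase hF
      have hsF : s ∉ F := hsfree F hF
      have hFsubG : F ⊆ gflat M s S := hPG F (Finset.mem_filter.mpr ⟨hFS, hsF⟩)
      have hlt := rkN_lt_of_flat_ssubset hfin (hflag.1 F hFS).1 hPF.1
        (hFsubG.ssubset_of_ne hFG)
      have h2 := (Finset.mem_Icc.mp hrkIcc).2
      omega
    · simp only [if_neg hGmem]
      have hcomp : ∀ F ∈ S, F ⊆ gflat M s S ∨ gflat M s S ⊆ F := by
        intro F hF
        by_cases hsF : s ∈ F
        · exact Or.inr (hTG F hF hsF)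
        · exact Or.inl (hPG F (Finset.mem_filter.mpr ⟨hF, hsF⟩))
      refine (hBadMem _).mpr ⟨⟨⟨?_, ?_⟩, ?_⟩, ?_⟩
      · intro F hF
        rcases Finset.mem_insert.mp hF with rfl | hF'
        · exact hPF
        · exact hflag.1 F hF'
      · intro F hF G hG
        rcases Finset.mem_insert.mp hF with rfl | hF' <;>
          rcases Finset.mem_insert.mp hG with rfl | hG'
        · exact Or.inl subset_rfl
        · exact (hcomp G hG').symm
        · exact hcomp F hF'
        · exact hflag.2 F hF' G hG'
      · intro F hF
        rcases Finset.mem_insert.mp hF with rfl | hF'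
        · exact hrkIcc
        · exact hranks F hF'
      · rintro ⟨-, hsfree⟩
        exact hsfree (gflat M s S) (Finset.mem_insert_self _ _) (mem_gflat hs S)
  case refine_4 => -- involution
    intro S hS
    by_cases hGmem : gflat M s S ∈ S
    · simp only [if_pos hGmem, gflat_erase S (mem_gflat hs S),
        if_neg (Finset.notMem_erase _ _), Finset.insert_erase hGmem]
    · simp only [if_neg hGmem, gflat_insert S (mem_gflat hs S),
        if_pos (Finset.mem_insert_self _ _), Finset.erase_insert hGmem]
  case refine_1 => -- signs cancel
    intro S hS
    obtain ⟨⟨hflag, hranks⟩, hbad⟩ := (hBadMem S).mp hS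
    obtain ⟨hPF, hrkIcc, hPG, hTG⟩ := key_props hfin hloop hr hd0 hdr hs hflag hranks hbad
    by_cases hGmem : gflat M s S ∈ S
    · simp only [if_pos hGmem]
      have hflag' : IsFlagF M (S.erase (gflat M s S)) :=
        ⟨fun F hF => hflag.1 F (Finset.mem_of_mem_erase hF),
          fun F hF G hG => hflag.2 F (Finset.mem_of_mem_erase hF) G (Finset.mem_of_mem_erase hG)⟩
      simp only [hf, hcard_img S hflag, hcard_img _ hflag']
      rw [Finset.card_erase_of_mem hGmem]
      have hpos : 0 < S.card := Finset.card_pos.mpr ⟨_, hGmem⟩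
      obtain ⟨n, hn⟩ : ∃ n, S.card = n + 1 := ⟨S.card - 1, by omega⟩
      rw [hn]
      simp [pow_succ]
    · simp only [if_neg hGmem]
      have hflag' : IsFlagF M (insert (gflat M s S) S) := by
        have hcomp : ∀ F ∈ S, F ⊆ gflat M s S ∨ gflat M s S ⊆ F := by
          intro F hF
          by_cases hsF : s ∈ F
          · exact Or.inr (hTG F hF hsF)
          · exact Or.inl (hPG F (Finset.mem_filter.mpr ⟨hF, hsF⟩))
        refine ⟨?_, ?_⟩
        · intro F hF
          rcases Finset.mem_insert.mp hF with rfl | hF'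
          · exact hPF
          · exact hflag.1 F hF'
        · intro F hF G hG
          rcases Finset.mem_insert.mp hF with rfl | hF' <;>
            rcases Finset.mem_insert.mp hG with rfl | hG'
          · exact Or.inl subset_rfl
          · exact (hcomp G hG').symm
          · exact hcomp F hF'
          · exact hflag.2 F hF' G hG'
      simp only [hf, hcard_img S hflag, hcard_img _ hflag']
      rw [Finset.card_insert_of_notMem hGmem]
      simp [pow_succ]
  case refine_2 => -- nontriviality
    intro S hS hfS
    by_cases hGmem : gflat M s S ∈ S
    · simp only [if_pos hGmem]
      intro h
      have := Finset.card_erase_of_mem hGmem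
      have hpos : 0 < S.card := Finset.card_pos.mpr ⟨_, hGmem⟩
      rw [h] at this
      omega
    · simp only [if_neg hGmem]
      intro h
      have := Finset.card_insert_of_notMem hGmem
      rw [h] at this
      omega

end ChowPaper
end

section
/- Let M be a loopless matroid of rank r on a finite ground set E. Let F_1 ⊂ F_2 be flats of M with rk(F_1) = d_1 and rk(F_2) = d_2 (where F_1 = ∅ or F_2 = E are allowed, with the convention x_∅ = x_E = 1 in A*(M)). Let f = ∏_{F ∈ I} x_F be a monomial of degree d in A*(M), where I is a multiset of flats each of which satisfies F_1 ⊊ F ⊊ F_2. If d_2 − d_1 ≤ d, then x_{F_1}·f·x_{F_2} = 0 in A*(M). -/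
open scoped Classical
open MvPolynomial

namespace ChowPaper

variable {α : Type*}

variable (R : Type*) [CommRing R]

section Alg
variable (M : Matroid α)

lemma flatIdx_finite (hfin : M.E.Finite) : Finite (FlatIdx M) := by
  have h1 : {F : Set α | PFlat M F} ⊆ {F | F ⊆ M.E} := fun F hF => hF.1.subset_ground
  have h2 : {F : Set α | F ⊆ M.E}.Finite := hfin.finite_subsets
  exact (h2.subset h1).to_subtype

lemma xcls_mul_eq_zero {F G : FlatIdx M} (h1 : ¬ F.1 ⊆ G.1) (h2 : ¬ G.1 ⊆ F.1) :
    xcls ℤ M F * xcls ℤ M G = 0 := by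
  rw [xcls, xcls, ← map_mul]
  exact Ideal.Quotient.eq_zero_iff_mem.2
    (Ideal.subset_span (Or.inl ⟨F, G, h1, h2, rfl⟩))

lemma alpha_sum [Fintype (FlatIdx M)] {i j : α} (hi : i ∈ M.E) (hj : j ∈ M.E) :
    (∑ F ∈ Finset.univ.filter (fun F : FlatIdx M => i ∈ F.1), xcls ℤ M F) =
    ∑ F ∈ Finset.univ.filter (fun F : FlatIdx M => j ∈ F.1), xcls ℤ M F := by
  have key : cmk ℤ M (alphaPre ℤ M i) = cmk ℤ M (alphaPre ℤ M j) :=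
    Ideal.Quotient.eq.2 (Ideal.subset_span (Or.inr ⟨i, hi, j, hj, rfl⟩))
  have conv : ∀ k : α, cmk ℤ M (alphaPre ℤ M k) =
      ∑ F ∈ Finset.univ.filter (fun F : FlatIdx M => k ∈ F.1), xcls ℤ M F := by
    intro k
    rw [alphaPre, finsum_eq_sum_of_fintype, map_sum, Finset.sum_filter]
    refine Finset.sum_congr rfl fun F _ => ?_
    split_ifs with h
    · rfl
    · exact map_zero _
  rw [conv i, conv j] at key
  exact key


lemma star [Fintype (FlatIdx M)] {F : FlatIdx M} {i j : α}
    (hi : i ∈ F.1) (hiE : i ∈ M.E) (hj : j ∈ M.E) (hjF : j ∉ F.1) (m : Chow ℤ M) :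
    xcls ℤ M F * (xcls ℤ M F * m) =
      - (∑ G ∈ Finset.univ.filter (fun G : FlatIdx M => i ∈ G.1 ∧ G.1 ⊂ F.1),
          xcls ℤ M G * (xcls ℤ M F * m))
      - (∑ G ∈ Finset.univ.filter (fun G : FlatIdx M => F.1 ⊂ G.1 ∧ j ∉ G.1),
          xcls ℤ M G * (xcls ℤ M F * m)) := by
  set t : FlatIdx M → Chow ℤ M := fun G => xcls ℤ M G * (xcls ℤ M F * m) with ht
  have hzero : ∀ G : FlatIdx M, ¬ G.1 ⊆ F.1 → ¬ F.1 ⊆ G.1 → t G = 0 := by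
    intro G hGF hFG
    have h0 : xcls ℤ M G * xcls ℤ M F = 0 := xcls_mul_eq_zero M hGF hFG
    show xcls ℤ M G * (xcls ℤ M F * m) = 0
    rw [← mul_assoc, h0, zero_mul]
  have hsub : ∀ G : FlatIdx M, G.1 ⊆ F.1 → G ≠ F → G.1 ⊂ F.1 :=
    fun G h hne => ssubset_of_subset_of_ne h (fun e => hne (Subtype.ext e))
  have hsub' : ∀ G : FlatIdx M, F.1 ⊆ G.1 → G ≠ F → F.1 ⊂ G.1 :=
    fun G h hne => ssubset_of_subset_of_ne h (fun e => hne (Subtype.ext e.symm))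
  have L := alpha_sum M hiE hj
  have L' : (∑ G : FlatIdx M, if i ∈ G.1 then t G else 0) =
      ∑ G : FlatIdx M, if j ∈ G.1 then t G else 0 := by
    have h2 := congrArg (fun z => z * (xcls ℤ M F * m)) L
    simp only [Finset.sum_mul] at h2
    rw [Finset.sum_filter, Finset.sum_filter] at h2
    simpa [ht, ite_mul, zero_mul] using h2
  have point1 : ∀ G : FlatIdx M,
      (if i ∈ G.1 then t G else 0) =
      (if G = F then t G else 0) + ((if i ∈ G.1 ∧ G.1 ⊂ F.1 then t G else 0) +
        (if F.1 ⊂ G.1 then t G else 0)) := by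
    intro G
    by_cases hGF : G = F
    · subst hGF
      simp [hi, ssubset_irrefl]
    · rw [if_neg hGF, zero_add]
      by_cases hiG : i ∈ G.1
      · rw [if_pos hiG]
        by_cases hGsubF : G.1 ⊂ F.1
        · rw [if_pos ⟨hiG, hGsubF⟩, if_neg (fun h => (ssubset_irrefl G.1) (hGsubF.trans h)),
            add_zero]
        · rw [if_neg (fun h => hGsubF h.2), zero_add]
          by_cases hFG : F.1 ⊂ G.1
          · rw [if_pos hFG]
          · rw [if_neg hFG]
            exact hzero G (fun h => hGsubF (hsub G h hGF)) (fun h => hFG (hsub' G h hGF))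
      · rw [if_neg hiG, if_neg (fun h : i ∈ G.1 ∧ _ => hiG h.1),
          if_neg (fun h : F.1 ⊂ G.1 => hiG (h.subset hi)), add_zero]
  have point2 : ∀ G : FlatIdx M,
      (if j ∈ G.1 then t G else 0) + (if F.1 ⊂ G.1 ∧ j ∉ G.1 then t G else 0) =
      (if F.1 ⊂ G.1 then t G else 0) := by
    intro G
    by_cases hFG : F.1 ⊂ G.1
    · by_cases hjG : j ∈ G.1
      · rw [if_pos hjG, if_neg (fun h : F.1 ⊂ G.1 ∧ j ∉ G.1 => h.2 hjG), if_pos hFG, add_zero]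
      · rw [if_neg hjG, if_pos ⟨hFG, hjG⟩, if_pos hFG, zero_add]
    · by_cases hjG : j ∈ G.1
      · rw [if_pos hjG, if_neg (fun h : F.1 ⊂ G.1 ∧ j ∉ G.1 => hFG h.1), if_neg hFG, add_zero]
        exact hzero G (fun h => hjF (h hjG)) (fun h => hFG (hsub' G h (fun e => hjF (e ▸ hjG))))
      · rw [if_neg hjG, if_neg (fun h : F.1 ⊂ G.1 ∧ j ∉ G.1 => hFG h.1), if_neg hFG, add_zero]
  have e1 : (∑ G : FlatIdx M, if i ∈ G.1 then t G else 0) =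
      t F + ((∑ G : FlatIdx M, if i ∈ G.1 ∧ G.1 ⊂ F.1 then t G else 0) +
        ∑ G : FlatIdx M, if F.1 ⊂ G.1 then t G else 0) := by
    rw [Finset.sum_congr rfl (fun G _ => point1 G), Finset.sum_add_distrib,
      Finset.sum_add_distrib, Finset.sum_ite_eq' Finset.univ F t, if_pos (Finset.mem_univ F)]
  have e2 : (∑ G : FlatIdx M, if j ∈ G.1 then t G else 0) +
      (∑ G : FlatIdx M, if F.1 ⊂ G.1 ∧ j ∉ G.1 then t G else 0) =
      ∑ G : FlatIdx M, if F.1 ⊂ G.1 then t G else 0 := by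
    rw [← Finset.sum_add_distrib]
    exact Finset.sum_congr rfl (fun G _ => point2 G)
  rw [Finset.sum_filter, Finset.sum_filter]
  show t F = _ - _
  linear_combination -e1 + L' + e2


-- rank lemmas
lemma rk_bdd {X : Set α} (hX : X ⊆ M.E) (hfin : M.E.Finite) :
    BddAbove {n : ℕ | ∃ I, M.Indep I ∧ I ⊆ X ∧ I.ncard = n} := by
  refine ⟨X.ncard, ?_⟩
  rintro n ⟨I, hI, hIX, rfl⟩
  exact Set.ncard_le_ncard hIX (hfin.subset hX)

lemma le_rkN_s2 (hfin : M.E.Finite) {J X : Set α} (hJ : M.Indep J) (hJX : J ⊆ X) (hX : X ⊆ M.E) :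
    J.ncard ≤ rkN M X :=
  le_csSup (rk_bdd M hX hfin) ⟨J, hJ, hJX, rfl⟩

lemma rkN_exists (hfin : M.E.Finite) {X : Set α} (hX : X ⊆ M.E) :
    ∃ J, M.Indep J ∧ J ⊆ X ∧ J.ncard = rkN M X := by
  have hne : {n : ℕ | ∃ I, M.Indep I ∧ I ⊆ X ∧ I.ncard = n}.Nonempty :=
    ⟨0, ∅, M.empty_indep, Set.empty_subset X, by simp⟩
  exact Nat.sSup_mem hne (rk_bdd M hX hfin)

lemma rkN_lt_rkN (hfin : M.E.Finite) {A B : Set α} (hA : M.IsFlat A) (hB : M.IsFlat B)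
    (hAB : A ⊂ B) : rkN M A < rkN M B := by
  have hBE : B ⊆ M.E := hB.subset_ground
  have hAE : A ⊆ M.E := hA.subset_ground
  obtain ⟨J, hJ, hJA, hJcard⟩ := rkN_exists M hfin hAE
  obtain ⟨I, hI, hJI⟩ := hJ.subset_isBasis_of_subset hJA hAE
  obtain ⟨e, heB, heA⟩ := Set.exists_of_ssubset hAB
  have hclI : M.closure I = A := by rw [hI.closure_eq_closure, hA.closure]
  have heI : M.Indep (insert e I) := by
    rw [hI.indep.insert_indep_iff]
    exact Or.inl ⟨hBE heB, by rwa [hclI]⟩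
  have hIfin : I.Finite := hfin.subset (hI.subset.trans hAE)
  have h1 : (insert e I).ncard = I.ncard + 1 := by
    rw [Set.ncard_insert_of_notMem (fun h => heA (hI.subset h)) hIfin]
  have h2 : (insert e I).ncard ≤ rkN M B :=
    le_rkN_s2 M hfin heI (Set.insert_subset heB (hI.subset.trans hAB.subset)) hBE
  have h3 : J.ncard ≤ I.ncard := Set.ncard_le_ncard hJI hIfin
  omega

lemma finset_exists_greatest (T : Finset (Set α)) (hne : T.Nonempty)
    (hcomp : ∀ H ∈ T, ∀ H' ∈ T, H ⊆ H' ∨ H' ⊆ H) :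
    ∃ Mx ∈ T, ∀ H ∈ T, H ⊆ Mx := by
  obtain ⟨Mx, hMx, hmax⟩ := Set.Finite.exists_maximalFor (id : Set α → Set α) ↑T
    (T.finite_toSet) (by simpa using hne)
  refine ⟨Mx, by simpa using hMx, fun H hH => ?_⟩
  rcases hcomp H hH Mx (by simpa using hMx) with h | h
  · exact h
  · exact hmax (by simpa using hH) h

lemma finset_exists_least (T : Finset (Set α)) (hne : T.Nonempty)
    (hcomp : ∀ H ∈ T, ∀ H' ∈ T, H ⊆ H' ∨ H' ⊆ H) :
    ∃ Mx ∈ T, ∀ H ∈ T, Mx ⊆ H := by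
  obtain ⟨Mx, hMx, hmin⟩ := Set.Finite.exists_minimalFor (id : Set α → Set α) ↑T
    (T.finite_toSet) (by simpa using hne)
  refine ⟨Mx, by simpa using hMx, fun H hH => ?_⟩
  rcases hcomp H hH Mx (by simpa using hMx) with h | h
  · exact hmin (by simpa using hH) h
  · exact h

lemma chain_rank (hfin : M.E.Finite) {A : Set α} (hA : M.IsFlat A) :
    ∀ n (T : Finset (Set α)), T.card = n →
    ∀ B, M.IsFlat B → A ⊂ B → (∀ H ∈ T, M.IsFlat H ∧ A ⊂ H ∧ H ⊂ B) →
    (∀ H ∈ T, ∀ H' ∈ T, H ⊆ H' ∨ H' ⊆ H) →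
    rkN M A + T.card < rkN M B := by
  intro n
  induction n with
  | zero =>
    intro T hT B hB hAB _ _
    rw [hT]
    simpa using rkN_lt_rkN M hfin hA hB hAB
  | succ n ih =>
    intro T hT B hB hAB hmem hcomp
    have hne : T.Nonempty := by rw [← Finset.card_pos, hT]; omega
    obtain ⟨Mx, hMxT, hmax⟩ := finset_exists_greatest T hne hcomp
    obtain ⟨hMxF, hAMx, hMxB⟩ := hmem Mx hMxT
    have hcard : (T.erase Mx).card = n := by rw [Finset.card_erase_of_mem hMxT, hT]; omega
    have h1 : rkN M A + n < rkN M Mx := by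
      rw [← hcard]
      refine ih (T.erase Mx) hcard Mx hMxF hAMx ?_ ?_
      · intro H hH
        have hHT := Finset.mem_of_mem_erase hH
        have hne' := Finset.ne_of_mem_erase hH
        exact ⟨(hmem H hHT).1, (hmem H hHT).2.1, ssubset_of_subset_of_ne (hmax H hHT) hne'⟩
      · intro H h1 H' h2
        exact hcomp H (Finset.mem_of_mem_erase h1) H' (Finset.mem_of_mem_erase h2)
    have h2 : rkN M Mx < rkN M B := rkN_lt_rkN M hfin hMxF hB hMxB
    omega

lemma prod_zero_of_incomp (J : Multiset (FlatIdx M)) {F G : FlatIdx M}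
    (hF : F ∈ J) (hG : G ∈ J) (h1 : ¬ F.1 ⊆ G.1) (h2 : ¬ G.1 ⊆ F.1) :
    (J.map (xcls ℤ M)).prod = 0 := by
  have hne : G ≠ F := fun e => h1 (e ▸ subset_rfl)
  have hG' : G ∈ J.erase F := (Multiset.mem_erase_of_ne hne).2 hG
  have e1 : J = F ::ₘ J.erase F := (Multiset.cons_erase hF).symm
  have e2 : J.erase F = G ::ₘ (J.erase F).erase G := (Multiset.cons_erase hG').symm
  rw [e1, e2, Multiset.map_cons, Multiset.map_cons, Multiset.prod_cons, Multiset.prod_cons,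
    ← mul_assoc, xcls_mul_eq_zero M h1 h2, zero_mul]

lemma nodup_contra (hfin : M.E.Finite) {F1 F2 : Set α} (hF1 : M.IsFlat F1) (hF2 : M.IsFlat F2)
    (h12 : F1 ⊂ F2) (J : Multiset (FlatIdx M))
    (hJ : ∀ F ∈ J, F1 ⊂ F.1 ∧ F.1 ⊂ F2)
    (hcomp : ∀ F ∈ J, ∀ G ∈ J, F.1 ⊆ G.1 ∨ G.1 ⊆ F.1)
    (hnd : J.Nodup) (hrk : rkN M F2 - rkN M F1 ≤ Multiset.card J) : False := by
  set T : Finset (Set α) := (J.map (fun F : FlatIdx M => F.1)).toFinset with hT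
  have hmapnd : (J.map (fun F : FlatIdx M => F.1)).Nodup :=
    hnd.map (fun a b h => Subtype.ext h)
  have hTcard : T.card = Multiset.card J := by
    rw [hT, Multiset.toFinset_card_eq_card_iff_nodup.2 hmapnd, Multiset.card_map]
  have hmem : ∀ H ∈ T, ∃ F ∈ J, F.1 = H := by
    intro H hH
    rw [hT, Multiset.mem_toFinset, Multiset.mem_map] at hH
    exact hH
  have hlt : rkN M F1 + T.card < rkN M F2 := by
    refine chain_rank M hfin hF1 T.card T rfl F2 hF2 h12 ?_ ?_
    · intro H hH
      obtain ⟨F, hFJ, rfl⟩ := hmem H hH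
      exact ⟨F.2.1, (hJ F hFJ).1, (hJ F hFJ).2⟩
    · intro H hH H' hH'
      obtain ⟨F, hFJ, rfl⟩ := hmem H hH
      obtain ⟨F', hFJ', rfl⟩ := hmem H' hH'
      exact hcomp F hFJ F' hFJ'
  omega


lemma step [Fintype (FlatIdx M)] (hfin : M.E.Finite) {F1 F2 : Set α}
    (hF1 : M.IsFlat F1) (hF2 : M.IsFlat F2) (h12 : F1 ⊂ F2) (n : ℕ)
    (ih : ∀ J : Multiset (FlatIdx M), (∀ F ∈ J, F1 ⊂ F.1 ∧ F.1 ⊂ F2) →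
      rkN M F2 - rkN M F1 ≤ Multiset.card J →
      Multiset.card J - J.toFinset.card ≤ n →
      xv ℤ M F1 * (J.map (xcls ℤ M)).prod * xv ℤ M F2 = 0)
    (J : Multiset (FlatIdx M)) (hJ : ∀ F ∈ J, F1 ⊂ F.1 ∧ F.1 ⊂ F2)
    (hrk : rkN M F2 - rkN M F1 ≤ Multiset.card J)
    (hms : Multiset.card J - J.toFinset.card ≤ n + 1)
    (hcomp : ∀ F ∈ J, ∀ G ∈ J, F.1 ⊆ G.1 ∨ G.1 ⊆ F.1)
    (F : FlatIdx M) (hcF : 2 ≤ J.count F) :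
    xv ℤ M F1 * (J.map (xcls ℤ M)).prod * xv ℤ M F2 = 0 := by
  have hFJ : F ∈ J := by rw [← Multiset.count_pos]; omega
  have hFJe : F ∈ J.erase F := by
    rw [← Multiset.count_pos, Multiset.count_erase_self]; omega
  set J' : Multiset (FlatIdx M) := (J.erase F).erase F with hJ'def
  have hJeq : J = F ::ₘ F ::ₘ J' := by
    rw [hJ'def, Multiset.cons_erase hFJe, Multiset.cons_erase hFJ]
  have hJ'mem : ∀ H ∈ J', H ∈ J := fun H hH =>
    Multiset.mem_of_mem_erase (Multiset.mem_of_mem_erase hH)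
  obtain ⟨hF1F, hFF2⟩ := hJ F hFJ
  have hFE : F.1 ⊆ M.E := F.2.1.subset_ground
  have hF2E : F2 ⊆ M.E := hF2.subset_ground
  have hF1neE : F1 ≠ M.E := by
    intro h
    rw [h] at h12
    exact h12.not_subset hF2E
  obtain ⟨e2, he2, -⟩ := Set.exists_of_ssubset h12
  -- lower chain part
  set TL : Finset (Set α) :=
    insert F1 ((J'.map (fun H : FlatIdx M => H.1)).toFinset.filter (fun H => H ⊂ F.1)) with hTL
  have hTLmem : ∀ H ∈ TL, H = F1 ∨ ∃ K, K ∈ J' ∧ K.1 = H ∧ H ⊂ F.1 := by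
    intro H hH
    rcases Finset.mem_insert.1 hH with h | h
    · exact Or.inl h
    · right
      obtain ⟨h1, h2⟩ := Finset.mem_filter.1 h
      rw [Multiset.mem_toFinset, Multiset.mem_map] at h1
      obtain ⟨K, hK, rfl⟩ := h1
      exact ⟨K, hK, rfl, h2⟩
  have hTLcomp : ∀ H ∈ TL, ∀ H' ∈ TL, H ⊆ H' ∨ H' ⊆ H := by
    intro H hH H' hH'
    rcases hTLmem H hH with rfl | ⟨K, hK, rfl, -⟩ <;>
      rcases hTLmem H' hH' with rfl | ⟨K', hK', rfl, -⟩
    · exact Or.inl subset_rfl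
    · exact Or.inl (hJ K' (hJ'mem K' hK')).1.subset
    · exact Or.inr (hJ K (hJ'mem K hK)).1.subset
    · exact hcomp K (hJ'mem K hK) K' (hJ'mem K' hK')
  obtain ⟨maxL, hmaxLT, hmaxL⟩ := finset_exists_greatest TL ⟨F1, Finset.mem_insert_self _ _⟩ hTLcomp
  have hmaxLF : maxL ⊂ F.1 := by
    rcases Finset.mem_insert.1 hmaxLT with rfl | h
    · exact hF1F
    · exact (Finset.mem_filter.1 h).2
  obtain ⟨i, hiF, hiL⟩ := Set.exists_of_ssubset hmaxLF
  have hiE : i ∈ M.E := hFE hiF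
  have hiF1 : i ∉ F1 := fun h => hiL (hmaxL F1 (Finset.mem_insert_self _ _) h)
  have hilow : ∀ H ∈ J', H.1 ⊂ F.1 → i ∉ H.1 := by
    intro H hH hsub h
    refine hiL (hmaxL H.1 ?_ h)
    exact Finset.mem_insert_of_mem (Finset.mem_filter.2
      ⟨Multiset.mem_toFinset.2 (Multiset.mem_map_of_mem _ hH), hsub⟩)
  -- upper chain part
  set TU : Finset (Set α) :=
    insert F2 ((J'.map (fun H : FlatIdx M => H.1)).toFinset.filter (fun H => F.1 ⊂ H)) with hTU
  have hTUmem : ∀ H ∈ TU, H = F2 ∨ ∃ K, K ∈ J' ∧ K.1 = H ∧ F.1 ⊂ H := by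
    intro H hH
    rcases Finset.mem_insert.1 hH with h | h
    · exact Or.inl h
    · right
      obtain ⟨h1, h2⟩ := Finset.mem_filter.1 h
      rw [Multiset.mem_toFinset, Multiset.mem_map] at h1
      obtain ⟨K, hK, rfl⟩ := h1
      exact ⟨K, hK, rfl, h2⟩
  have hTUcomp : ∀ H ∈ TU, ∀ H' ∈ TU, H ⊆ H' ∨ H' ⊆ H := by
    intro H hH H' hH'
    rcases hTUmem H hH with rfl | ⟨K, hK, rfl, -⟩ <;>
      rcases hTUmem H' hH' with rfl | ⟨K', hK', rfl, -⟩
    · exact Or.inl subset_rfl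
    · exact Or.inr (hJ K' (hJ'mem K' hK')).2.subset
    · exact Or.inl (hJ K (hJ'mem K hK)).2.subset
    · exact hcomp K (hJ'mem K hK) K' (hJ'mem K' hK')
  obtain ⟨minU, hminUT, hminU⟩ := finset_exists_least TU ⟨F2, Finset.mem_insert_self _ _⟩ hTUcomp
  have hFminU : F.1 ⊂ minU := by
    rcases Finset.mem_insert.1 hminUT with rfl | h
    · exact hFF2
    · exact (Finset.mem_filter.1 h).2
  have hminUF2 : minU ⊆ F2 := by
    rcases hTUmem minU hminUT with rfl | ⟨K, hK, rfl, -⟩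
    · exact subset_rfl
    · exact (hJ K (hJ'mem K hK)).2.subset
  obtain ⟨j, hjU, hjF⟩ := Set.exists_of_ssubset hFminU
  have hjF2 : j ∈ F2 := hminUF2 hjU
  have hjE : j ∈ M.E := hF2E hjF2
  have hjup : ∀ H ∈ J', F.1 ⊂ H.1 → j ∈ H.1 := by
    intro H hH hsub
    refine hminU H.1 ?_ hjU
    exact Finset.mem_insert_of_mem (Finset.mem_filter.2
      ⟨Multiset.mem_toFinset.2 (Multiset.mem_map_of_mem _ hH), hsub⟩)
  -- algebra
  set P : Chow ℤ M := (J'.map (xcls ℤ M)).prod with hP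
  set m : Chow ℤ M := P * (xv ℤ M F1 * xv ℤ M F2) with hm
  rw [hJeq, Multiset.map_cons, Multiset.map_cons, Multiset.prod_cons, Multiset.prod_cons]
  have hre : xv ℤ M F1 * (xcls ℤ M F * (xcls ℤ M F * P)) * xv ℤ M F2 =
      xcls ℤ M F * (xcls ℤ M F * m) := by rw [hm]; ring
  rw [hre, star M hiF hiE hjE hjF m]
  -- generic term vanishing via induction hypothesis
  have hterm : ∀ G : FlatIdx M, G ≠ F → (∀ H ∈ J', G ≠ H) → F1 ⊂ G.1 → G.1 ⊂ F2 →
      xcls ℤ M G * (xcls ℤ M F * m) = 0 := by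
    intro G hGne hGJ' hF1G hGF2
    set J2 : Multiset (FlatIdx M) := G ::ₘ F ::ₘ J' with hJ2def
    have hJ2 : ∀ H ∈ J2, F1 ⊂ H.1 ∧ H.1 ⊂ F2 := by
      intro H hH
      rw [hJ2def, Multiset.mem_cons, Multiset.mem_cons] at hH
      rcases hH with rfl | rfl | hH
      · exact ⟨hF1G, hGF2⟩
      · exact ⟨hF1F, hFF2⟩
      · exact hJ H (hJ'mem H hH)
    have hcard2 : Multiset.card J2 = Multiset.card J := by
      rw [hJ2def, hJeq]; simp
    have ht1 : J.toFinset = insert F J'.toFinset := by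
      rw [hJeq, Multiset.toFinset_cons, Multiset.toFinset_cons, Finset.insert_idem]
    have hGnot : G ∉ J.toFinset := by
      rw [ht1, Finset.mem_insert, Multiset.mem_toFinset]
      rintro (rfl | h)
      · exact hGne rfl
      · exact hGJ' G h rfl
    have ht2 : J2.toFinset.card = J.toFinset.card + 1 := by
      rw [hJ2def, Multiset.toFinset_cons, Multiset.toFinset_cons, ← ht1,
        Finset.card_insert_of_notMem hGnot]
    have hle := Multiset.toFinset_card_le J
    have hgo := ih J2 hJ2 (by rw [hcard2]; exact hrk) (by rw [hcard2, ht2]; omega)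
    calc xcls ℤ M G * (xcls ℤ M F * m)
        = xv ℤ M F1 * (J2.map (xcls ℤ M)).prod * xv ℤ M F2 := by
          rw [hJ2def, Multiset.map_cons, Multiset.map_cons, Multiset.prod_cons,
            Multiset.prod_cons, hm, hP]
          ring
      _ = 0 := hgo
  have hS2 : (∑ G ∈ Finset.univ.filter (fun G : FlatIdx M => i ∈ G.1 ∧ G.1 ⊂ F.1),
      xcls ℤ M G * (xcls ℤ M F * m)) = 0 := by
    refine Finset.sum_eq_zero fun G hG => ?_
    obtain ⟨-, hGi, hGsub⟩ := Finset.mem_filter.1 hG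
    have hGne : G ≠ F := fun e => (ssubset_irrefl F.1) (e ▸ hGsub)
    have hGJ' : ∀ H ∈ J', G ≠ H := by
      intro H hH he
      rcases hcomp H (hJ'mem H hH) F hFJ with h | h
      · by_cases heq : H.1 = F.1
        · exact hGne (he.trans (Subtype.ext heq))
        · refine hilow H hH (ssubset_of_subset_of_ne h heq) ?_
          rw [← he]; exact hGi
      · have h2 : H.1 ⊂ F.1 := by rw [← he]; exact hGsub
        exact (ssubset_irrefl H.1) (h2.trans_subset h)
    have hGF2 : G.1 ⊂ F2 := hGsub.trans hFF2
    by_cases hP1 : PFlat M F1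
    · by_cases hsub : F1 ⊆ G.1
      · exact hterm G hGne hGJ' (ssubset_of_subset_of_ne hsub (fun e => hiF1 (e ▸ hGi))) hGF2
      · have hsub2 : ¬ G.1 ⊆ F1 := fun h => hiF1 (h hGi)
        have hxv : xv ℤ M F1 = xcls ℤ M ⟨F1, hP1⟩ := dif_pos hP1
        have h0 : xcls ℤ M G * xcls ℤ M ⟨F1, hP1⟩ = 0 := xcls_mul_eq_zero M hsub2 hsub
        calc xcls ℤ M G * (xcls ℤ M F * m)
            = xcls ℤ M G * xv ℤ M F1 * (xcls ℤ M F * (P * xv ℤ M F2)) := by rw [hm]; ring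
          _ = 0 := by rw [hxv, h0, zero_mul]
    · have hF1e : F1 = ∅ := by
        by_contra h
        exact hP1 ⟨hF1, Set.nonempty_iff_ne_empty.2 h, hF1neE⟩
      exact hterm G hGne hGJ' (hF1e ▸ Set.empty_ssubset.2 G.2.2.1) hGF2
  have hS4 : (∑ G ∈ Finset.univ.filter (fun G : FlatIdx M => F.1 ⊂ G.1 ∧ j ∉ G.1),
      xcls ℤ M G * (xcls ℤ M F * m)) = 0 := by
    refine Finset.sum_eq_zero fun G hG => ?_
    obtain ⟨-, hGsub, hjG⟩ := Finset.mem_filter.1 hG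
    have hGne : G ≠ F := fun e => (ssubset_irrefl F.1) (e ▸ hGsub)
    have hGJ' : ∀ H ∈ J', G ≠ H := by
      intro H hH he
      rcases hcomp H (hJ'mem H hH) F hFJ with h | h
      · have h2 : F.1 ⊂ H.1 := by rw [← he]; exact hGsub
        exact (ssubset_irrefl F.1) (h2.trans_subset h)
      · by_cases heq : H.1 = F.1
        · exact hGne (he.trans (Subtype.ext heq))
        · refine hjG ?_
          rw [he]; exact hjup H hH (ssubset_of_subset_of_ne h (Ne.symm heq))
    have hF1G : F1 ⊂ G.1 := hF1F.trans hGsub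
    by_cases hP2 : PFlat M F2
    · by_cases hsub : G.1 ⊆ F2
      · exact hterm G hGne hGJ' hF1G (ssubset_of_subset_of_ne hsub (fun e => hjG (e ▸ hjF2)))
      · have hsub2 : ¬ F2 ⊆ G.1 := fun h => hjG (h hjF2)
        have hxv : xv ℤ M F2 = xcls ℤ M ⟨F2, hP2⟩ := dif_pos hP2
        have h0 : xcls ℤ M G * xcls ℤ M ⟨F2, hP2⟩ = 0 := xcls_mul_eq_zero M hsub hsub2
        calc xcls ℤ M G * (xcls ℤ M F * m)
            = xcls ℤ M G * xv ℤ M F2 * (xcls ℤ M F * (P * xv ℤ M F1)) := by rw [hm]; ring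
          _ = 0 := by rw [hxv, h0, zero_mul]
    · have hF2e : F2 = M.E := by
        by_contra h
        exact hP2 ⟨hF2, ⟨e2, he2⟩, h⟩
      exact hterm G hGne hGJ' hF1G
        (hF2e ▸ ssubset_of_subset_of_ne G.2.1.subset_ground G.2.2.2)
  rw [hS2, hS4]
  simp


lemma key [Fintype (FlatIdx M)] (hfin : M.E.Finite) {F1 F2 : Set α}
    (hF1 : M.IsFlat F1) (hF2 : M.IsFlat F2) (h12 : F1 ⊂ F2) :
    ∀ n : ℕ, ∀ J : Multiset (FlatIdx M),
      (∀ F ∈ J, F1 ⊂ F.1 ∧ F.1 ⊂ F2) →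
      rkN M F2 - rkN M F1 ≤ Multiset.card J →
      Multiset.card J - J.toFinset.card ≤ n →
      xv ℤ M F1 * (J.map (xcls ℤ M)).prod * xv ℤ M F2 = 0 := by
  intro n
  induction n with
  | zero =>
    intro J hJ hrk hms
    by_cases hcomp : ∀ F ∈ J, ∀ G ∈ J, F.1 ⊆ G.1 ∨ G.1 ⊆ F.1
    · have hle := Multiset.toFinset_card_le J
      have hnd : J.Nodup := Multiset.toFinset_card_eq_card_iff_nodup.1 (by omega)
      exact (nodup_contra M hfin hF1 hF2 h12 J hJ hcomp hnd hrk).elim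
    · push_neg at hcomp
      obtain ⟨F, hF, G, hG, h1, h2⟩ := hcomp
      rw [prod_zero_of_incomp M J hF hG h1 h2, mul_zero, zero_mul]
  | succ n ih =>
    intro J hJ hrk hms
    by_cases hcomp : ∀ F ∈ J, ∀ G ∈ J, F.1 ⊆ G.1 ∨ G.1 ⊆ F.1
    · by_cases hnd : J.Nodup
      · exact (nodup_contra M hfin hF1 hF2 h12 J hJ hcomp hnd hrk).elim
      · rw [Multiset.nodup_iff_count_le_one] at hnd
        push_neg at hnd
        obtain ⟨F, hF⟩ := hnd
        exact step M hfin hF1 hF2 h12 n ih J hJ hrk hms hcomp F hF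
    · push_neg at hcomp
      obtain ⟨F, hF, G, hG, h1, h2⟩ := hcomp
      rw [prod_zero_of_incomp M J hF hG h1 h2, mul_zero, zero_mul]

end Alg

/-- Vanishing of sandwiched monomials: if all flats of the multiset `I` lie strictly between the
flats `F₁ ⊂ F₂` of ranks `d₁, d₂`, and `d₂ - d₁ ≤ |I|`, then `x_{F₁}·(∏_{F ∈ I} x_F)·x_{F₂} = 0`
(with the convention `x_∅ = x_E = 1`). -/


theorem stmt2 (M : Matroid α) (hfin : M.E.Finite) (hloop : Loopless M)
    (r : ℕ) (hr : rkN M M.E = r)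
    (F1 F2 : Set α) (hF1 : M.IsFlat F1) (hF2 : M.IsFlat F2) (h12 : F1 ⊂ F2)
    (d1 d2 : ℕ) (hd1 : rkN M F1 = d1) (hd2 : rkN M F2 = d2)
    (I : Multiset (Set α)) (hI : ∀ F ∈ I, M.IsFlat F ∧ F1 ⊂ F ∧ F ⊂ F2)
    (d : ℕ) (hd : Multiset.card I = d) (hdd : d2 - d1 ≤ d) :
    xv ℤ M F1 * (I.map (xv ℤ M)).prod * xv ℤ M F2 = 0 := by
  have hFin : Finite (FlatIdx M) := flatIdx_finite M hfin
  letI : Fintype (FlatIdx M) := Fintype.ofFinite _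
  have hF2E : F2 ⊆ M.E := hF2.subset_ground
  have hPF : ∀ F ∈ I, PFlat M F := by
    intro F hF
    obtain ⟨hfl, h1, h2⟩ := hI F hF
    obtain ⟨x, hx, -⟩ := Set.exists_of_ssubset h1
    refine ⟨hfl, ⟨x, hx⟩, fun he => ?_⟩
    rw [he] at h2
    exact h2.not_subset hF2E
  set J : Multiset (FlatIdx M) := I.pmap (fun F h => (show FlatIdx M from ⟨F, h⟩)) hPF with hJdef
  have hmap : J.map (xcls ℤ M) = I.map (xv ℤ M) := by
    rw [hJdef, Multiset.map_pmap, show (I.map (xv ℤ M)) = I.pmap (fun F _ => xv ℤ M F) hPF from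
      (Multiset.pmap_eq_map _ _ _ hPF).symm]
    exact Multiset.pmap_congr I (fun F hF h1 h2 => by simp only [xv, dif_pos h1])
  have hJmem : ∀ G ∈ J, F1 ⊂ G.1 ∧ G.1 ⊂ F2 := by
    intro G hG
    rw [hJdef, Multiset.mem_pmap] at hG
    obtain ⟨F, hF, rfl⟩ := hG
    exact ⟨(hI F hF).2.1, (hI F hF).2.2⟩
  have hcard : Multiset.card J = d := by rw [hJdef, Multiset.card_pmap, hd]
  have hrk : rkN M F2 - rkN M F1 ≤ Multiset.card J := by
    rw [hcard, hd1, hd2]; exact hdd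
  rw [← hmap]
  exact key M hfin hF1 hF2 h12 (Multiset.card J) J hJmem hrk
    (by have := Multiset.toFinset_card_le J; omega)



end ChowPaper
end
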